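/- For every real t ≥ 0, every real L ∈ ℝ, and every integer d ≥ 1, the integral ∫₀^∞ x^d · [1/(1+e^{x - t - L/2}) + 1/(1+e^{x - t + L/2})] dx equals d! · (-Li_{d+1}(-e^{t+L/2}) - Li_{d+1}(-e^{t-L/2})), and this quantity is bounded above by a polynomial in t and L with positive leading behavior; in particular it is bounded above by d!·(P_{d+1}(t+L/2) + P_{d+1}(max(t-L/2,0)) + a_{d+1}) where P_{d+1}(s) = s^{d+1}/(d+1)! + (log 2) s^d/d! + Σ_{k=2}^{d+1} a_k s^{d+1-k}/(d+1-k)! and a_k = -Li_k(-1), assuming t ≥ L/2. -/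

import Mathlib

open scoped Nat

/-- The polylogarithm, defined recursively by `Li 1 x = -log (1 - x)` and
`Li (k+1) x = ∫ s in 0..x, Li k s / s`. -/
noncomputable def Li : ℕ → ℝ → ℝ
  | 0, _ => 0
  | 1, x => -Real.log (1 - x)
  | k + 2, x => ∫ s in (0:ℝ)..x, Li (k + 1) s / s

/-- `a_k = -Li_k(-1)`. -/
noncomputable def aCoeff (k : ℕ) : ℝ := -(Li k (-1))

/-- The upper-bound polynomial `P_m(s) = s^m/m! + (log 2) s^{m-1}/(m-1)!
  + Σ_{k=2}^m a_k s^{m-k}/(m-k)!`. -/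
noncomputable def Ppoly (m : ℕ) (s : ℝ) : ℝ :=
  s ^ m / (m ! : ℝ) + Real.log 2 * s ^ (m - 1) / ((m - 1)! : ℝ)
    + ∑ k ∈ Finset.Icc 2 m, aCoeff k * s ^ (m - k) / ((m - k)! : ℝ)

/-!
Put `F_m(μ) = -Li_m(-e^μ)` for `m ≥ 1` and let `F_0(μ) = 1/(1+e^{-μ})` be the Fermi function.
Then `F_{m+1}' = F_m` and `0 ≤ F_m(μ) ≤ e^μ`, so repeated integration by parts in `x` gives
`∫₀^∞ x^k F_m(μ - x) dx = k! F_{m+k+1}(μ)`; the integral of the theorem is the case `m = 0`,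
`k = d`, at `μ = t ± L/2`.

For the bound, `P_{m+1}' = P_m` and `P_m(0) = a_m = F_m(0)`, so `F_m ≤ P_m` on `[0, ∞)` follows
by induction on `m` from `log (1 + e^s) ≤ s + log 2`. At negative arguments, monotonicity of
`F_m` gives `F_m(s) ≤ F_m(0) = a_m`.
-/

open Set MeasureTheory Filter Topology

lemma Li_add_two (k : ℕ) (x : ℝ) : Li (k + 2) x = ∫ s in (0:ℝ)..x, Li (k + 1) s / s := rfl

lemma div_mem_Icc_zero_one {a x : ℝ} (hx : x ≤ 0) (ha : a ∈ Icc x 0) : a / x ∈ Icc (0:ℝ) 1 := by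
  rcases hx.lt_or_eq with hx | rfl
  · exact ⟨div_nonneg_of_nonpos ha.2 hx.le, (div_le_one_of_neg hx).2 ha.1⟩
  · simp

section Polylog

variable {k : ℕ}

lemma intervalIntegrable_Li_div (hc : ContinuousOn (Li (k + 1)) (Iio 0))
    (hb : ∀ x ≤ 0, Li (k + 1) x ∈ Icc x 0) {x : ℝ} (hx : x ≤ 0) :
    IntervalIntegrable (fun s => Li (k + 1) s / s) volume x 0 := by
  have hmeas : AEStronglyMeasurable (fun s => Li (k + 1) s / s) (volume.restrict (Ioc x 0)) := by
    rw [Measure.restrict_congr_set Ioo_ae_eq_Ioc.symm]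
    exact ((hc.mono fun s hs => hs.2).div continuousOn_id fun s hs => hs.2.ne).aestronglyMeasurable
      measurableSet_Ioo
  refine (intervalIntegrable_const (c := (1:ℝ))).mono_fun' (by rwa [uIoc_of_le hx]) ?_
  rw [uIoc_of_le hx]
  refine ae_restrict_of_forall_mem measurableSet_Ioc fun s hs => ?_
  have h := div_mem_Icc_zero_one hs.2 (hb s hs.2)
  exact (Real.norm_of_nonneg h.1).trans_le h.2

lemma hasDerivAt_Li_add_two (hc : ContinuousOn (Li (k + 1)) (Iio 0))
    (hb : ∀ x ≤ 0, Li (k + 1) x ∈ Icc x 0) {x : ℝ} (hx : x < 0) :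
    HasDerivAt (Li (k + 2)) (Li (k + 1) x / x) x := by
  have hgc : ContinuousOn (fun s => Li (k + 1) s / s) (Iio 0) :=
    hc.div continuousOn_id fun s hs => hs.ne
  rw [funext (Li_add_two k)]
  exact intervalIntegral.integral_hasDerivAt_right (intervalIntegrable_Li_div hc hb hx.le).symm
    (hgc.stronglyMeasurableAtFilter isOpen_Iio x hx) (hgc.continuousAt (isOpen_Iio.mem_nhds hx))

lemma Li_add_two_mem_Icc (hc : ContinuousOn (Li (k + 1)) (Iio 0))
    (hb : ∀ x ≤ 0, Li (k + 1) x ∈ Icc x 0) {x : ℝ} (hx : x ≤ 0) : Li (k + 2) x ∈ Icc x 0 := by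
  have hg : ∀ s ∈ Icc x 0, Li (k + 1) s / s ∈ Icc (0:ℝ) 1 := fun s hs =>
    div_mem_Icc_zero_one hs.2 (hb s hs.2)
  have h0 : 0 ≤ ∫ s in x..0, Li (k + 1) s / s :=
    intervalIntegral.integral_nonneg hx fun s hs => (hg s hs).1
  have h1 : ∫ s in x..0, Li (k + 1) s / s ≤ ∫ _ in x..0, (1:ℝ) :=
    intervalIntegral.integral_mono_on hx (intervalIntegrable_Li_div hc hb hx)
      intervalIntegrable_const fun s hs => (hg s hs).2
  rw [intervalIntegral.integral_const, smul_eq_mul, mul_one] at h1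
  rw [Li_add_two, intervalIntegral.integral_symm]
  constructor <;> linarith

-- The two facts are proved together: each one gives the integrability needed for the next `Li`.
lemma continuousOn_Li_and_mem_Icc (k : ℕ) :
    ContinuousOn (Li (k + 1)) (Iio 0) ∧ ∀ x ≤ 0, Li (k + 1) x ∈ Icc x 0 := by
  induction k with
  | zero =>
    refine ⟨ContinuousOn.neg <| (continuousOn_const.sub continuousOn_id).log fun x hx => ?_,
      fun x hx => ?_⟩
    · exact (sub_pos.2 (hx.trans zero_lt_one)).ne'
    · have h0 : 0 ≤ Real.log (1 - x) := Real.log_nonneg (by linarith)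
      have h1 : Real.log (1 - x) ≤ (1 - x) - 1 := Real.log_le_sub_one_of_pos (by linarith)
      exact ⟨by simp only [Li]; linarith, by simp only [Li]; linarith⟩
  | succ k ih =>
    exact ⟨fun x hx => (hasDerivAt_Li_add_two ih.1 ih.2 hx).continuousAt.continuousWithinAt,
      fun x hx => Li_add_two_mem_Icc ih.1 ih.2 hx⟩

lemma Li_mem_Icc (k : ℕ) {x : ℝ} (hx : x ≤ 0) : Li (k + 1) x ∈ Icc x 0 :=
  (continuousOn_Li_and_mem_Icc k).2 x hx

lemma hasDerivAt_Li (k : ℕ) {x : ℝ} (hx : x < 0) :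
    HasDerivAt (Li (k + 2)) (Li (k + 1) x / x) x :=
  hasDerivAt_Li_add_two (continuousOn_Li_and_mem_Icc k).1 (continuousOn_Li_and_mem_Icc k).2 hx

end Polylog

/-- For `m ≥ 1` this is the complete Fermi–Dirac integral `F_{m-1}`. At `m = 0` the Fermi function
replaces `-Li_0(-e^μ)`, which `Li` sets to `0`, so that `fermiDirac (m + 1)' = fermiDirac m` for
every `m`. -/
noncomputable def fermiDirac : ℕ → ℝ → ℝ
  | 0, μ => 1 / (1 + Real.exp (-μ))
  | m + 1, μ => -Li (m + 1) (-Real.exp μ)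

lemma fermiDirac_one (μ : ℝ) : fermiDirac 1 μ = Real.log (1 + Real.exp μ) := by
  simp [fermiDirac, Li]

lemma fermiDirac_succ_zero (m : ℕ) : fermiDirac (m + 1) 0 = aCoeff (m + 1) := by
  simp [fermiDirac, aCoeff]

lemma hasDerivAt_fermiDirac (m : ℕ) (μ : ℝ) :
    HasDerivAt (fermiDirac (m + 1)) (fermiDirac m μ) μ := by
  cases m with
  | zero =>
    rw [funext fermiDirac_one]
    refine ((Real.hasDerivAt_exp μ).const_add 1).log (by positivity) |>.congr_deriv ?_
    simp only [fermiDirac, Real.exp_neg]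
    field_simp
    ring
  | succ k =>
    have hx : -Real.exp μ < 0 := neg_neg_iff_pos.2 (Real.exp_pos μ)
    have h := (hasDerivAt_Li k hx).comp μ (Real.hasDerivAt_exp μ).neg
    rw [div_mul_cancel₀ _ hx.ne] at h
    exact h.neg

lemma continuous_fermiDirac (m : ℕ) : Continuous (fermiDirac m) := by
  cases m with
  | zero =>
    exact continuous_const.div (continuous_const.add (Real.continuous_exp.comp continuous_neg))
      fun μ => by positivity
  | succ k => exact continuous_iff_continuousAt.2 fun μ => (hasDerivAt_fermiDirac k μ).continuousAt

lemma fermiDirac_mem_Icc (m : ℕ) (μ : ℝ) : fermiDirac m μ ∈ Icc 0 (Real.exp μ) := by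
  cases m with
  | zero =>
    have h : Real.exp μ * Real.exp (-μ) = 1 := by rw [← Real.exp_add, add_neg_cancel, Real.exp_zero]
    refine ⟨by simp only [fermiDirac]; positivity, ?_⟩
    simp only [fermiDirac]
    rw [div_le_iff₀ (by positivity)]
    nlinarith [Real.exp_pos μ]
  | succ k =>
    have h := Li_mem_Icc k (neg_nonpos.2 (Real.exp_pos μ).le)
    exact ⟨by simp only [fermiDirac]; linarith [h.2], by simp only [fermiDirac]; linarith [h.1]⟩

lemma monotone_fermiDirac_succ (m : ℕ) : Monotone (fermiDirac (m + 1)) :=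
  monotone_of_hasDerivAt_nonneg (hasDerivAt_fermiDirac m) fun μ => (fermiDirac_mem_Icc m μ).1

section Integral

variable (k m : ℕ) (μ : ℝ)

lemma norm_pow_mul_fermiDirac_sub_le {x : ℝ} (hx : 0 ≤ x) :
    ‖x ^ k * fermiDirac m (μ - x)‖ ≤ Real.exp μ * (x ^ k * Real.exp (-x)) := by
  have h := fermiDirac_mem_Icc m (μ - x)
  rw [Real.norm_of_nonneg (mul_nonneg (by positivity) h.1), mul_left_comm, ← Real.exp_add,
    ← sub_eq_add_neg]
  exact mul_le_mul_of_nonneg_left h.2 (by positivity)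

lemma integrableOn_pow_mul_fermiDirac_sub :
    IntegrableOn (fun x => x ^ k * fermiDirac m (μ - x)) (Ioi 0) := by
  have hΓ : IntegrableOn (fun x : ℝ => x ^ k * Real.exp (-x)) (Ioi 0) := by
    refine (Real.GammaIntegral_convergent (s := k + 1) (by positivity)).congr_fun
      (fun x _ => ?_) measurableSet_Ioi
    beta_reduce
    rw [add_sub_cancel_right, Real.rpow_natCast, mul_comm]
  refine (hΓ.const_mul (Real.exp μ)).mono' ?_ ?_
  · exact ((continuous_pow k).mul ((continuous_fermiDirac m).comp
      (continuous_const.sub continuous_id))).aestronglyMeasurable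
  · exact ae_restrict_of_forall_mem measurableSet_Ioi fun x hx =>
      norm_pow_mul_fermiDirac_sub_le k m μ (le_of_lt hx)

lemma tendsto_pow_mul_fermiDirac_sub_atTop :
    Tendsto (fun x => x ^ k * fermiDirac m (μ - x)) atTop (𝓝 0) := by
  refine squeeze_zero_norm' ?_ (by
    simpa using (Real.tendsto_pow_mul_exp_neg_atTop_nhds_zero k).const_mul (Real.exp μ))
  filter_upwards [eventually_ge_atTop 0] with x hx
  exact norm_pow_mul_fermiDirac_sub_le k m μ hx

lemma hasDerivAt_fermiDirac_sub (x : ℝ) :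
    HasDerivAt (fun x => fermiDirac (m + 1) (μ - x)) (-fermiDirac m (μ - x)) x :=
  (hasDerivAt_fermiDirac m (μ - x)).comp_const_sub μ x

lemma integral_fermiDirac_sub :
    ∫ x in Ioi 0, fermiDirac m (μ - x) = fermiDirac (m + 1) μ := by
  have h := integral_Ioi_of_hasDerivAt_of_tendsto'
    (f := fun x => -fermiDirac (m + 1) (μ - x)) (m := 0)
    (fun x _ => by simpa using (hasDerivAt_fermiDirac_sub m μ x).fun_neg)
    (by simpa using integrableOn_pow_mul_fermiDirac_sub 0 m μ)
    (by simpa using (tendsto_pow_mul_fermiDirac_sub_atTop 0 (m + 1) μ).neg)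
  simpa using h

lemma integral_pow_succ_mul_fermiDirac_sub :
    ∫ x in Ioi 0, x ^ (k + 1) * fermiDirac m (μ - x)
      = (k + 1) * ∫ x in Ioi 0, x ^ k * fermiDirac (m + 1) (μ - x) := by
  have hint₁ := integrableOn_pow_mul_fermiDirac_sub (k + 1) m μ
  have hint₂ := (integrableOn_pow_mul_fermiDirac_sub k (m + 1) μ).const_mul (k + 1 : ℝ)
  have hderiv : ∀ x ∈ Ici (0:ℝ), HasDerivAt (fun x => -(x ^ (k + 1) * fermiDirac (m + 1) (μ - x)))
      (x ^ (k + 1) * fermiDirac m (μ - x) - (k + 1) * (x ^ k * fermiDirac (m + 1) (μ - x))) x :=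
    fun x _ => by
      refine ((hasDerivAt_pow (k + 1) x).mul
        (hasDerivAt_fermiDirac_sub m μ x)).fun_neg.congr_deriv ?_
      push_cast
      ring
  have h := integral_Ioi_of_hasDerivAt_of_tendsto' hderiv (hint₁.sub hint₂)
    (by simpa using (tendsto_pow_mul_fermiDirac_sub_atTop (k + 1) (m + 1) μ).neg)
  rw [integral_sub hint₁ hint₂, integral_const_mul] at h
  rw [zero_pow k.succ_ne_zero, zero_mul, neg_zero, sub_zero] at h
  exact sub_eq_zero.1 h

theorem integral_pow_mul_fermiDirac_sub :
    ∫ x in Ioi 0, x ^ k * fermiDirac m (μ - x) = k ! * fermiDirac (m + k + 1) μ := by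
  induction k generalizing m with
  | zero => simpa using integral_fermiDirac_sub m μ
  | succ k ih =>
    rw [integral_pow_succ_mul_fermiDirac_sub, ih, Nat.factorial_succ, Nat.cast_mul,
      show m + 1 + k + 1 = m + (k + 1) + 1 by ring]
    push_cast
    ring

end Integral

lemma hasDerivAt_mul_pow_div_factorial (c : ℝ) (n : ℕ) (s : ℝ) :
    HasDerivAt (fun s => c * s ^ (n + 1) / ((n + 1)! : ℝ)) (c * s ^ n / n !) s := by
  refine (((hasDerivAt_pow (n + 1) s).const_mul c).div_const _).congr_deriv ?_
  rw [Nat.factorial_succ]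
  push_cast
  field_simp

lemma Ppoly_add_two (m : ℕ) (s : ℝ) :
    Ppoly (m + 2) s = s ^ (m + 2) / ((m + 2)! : ℝ) + Real.log 2 * s ^ (m + 1) / ((m + 1)! : ℝ)
      + ∑ k ∈ Finset.Icc 2 (m + 1), aCoeff k * s ^ (m + 2 - k) / ((m + 2 - k)! : ℝ)
      + aCoeff (m + 2) := by
  rw [Ppoly, Finset.sum_Icc_succ_top (by omega), Nat.sub_self, pow_zero, Nat.factorial_zero]
  push_cast
  ring

lemma hasDerivAt_Ppoly (m : ℕ) (s : ℝ) : HasDerivAt (Ppoly (m + 2)) (Ppoly (m + 1) s) s := by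
  rw [funext (Ppoly_add_two m)]
  have hsum : HasDerivAt
      (fun s => ∑ k ∈ Finset.Icc 2 (m + 1), aCoeff k * s ^ (m + 2 - k) / ((m + 2 - k)! : ℝ))
      (∑ k ∈ Finset.Icc 2 (m + 1), aCoeff k * s ^ (m + 1 - k) / ((m + 1 - k)! : ℝ)) s := by
    refine HasDerivAt.fun_sum fun k hk => ?_
    have hk : m + 2 - k = m + 1 - k + 1 := by have := (Finset.mem_Icc.1 hk).2; omega
    simpa only [hk] using hasDerivAt_mul_pow_div_factorial (aCoeff k) (m + 1 - k) s
  have h := (((hasDerivAt_mul_pow_div_factorial 1 (m + 1) s).fun_add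
    (hasDerivAt_mul_pow_div_factorial (Real.log 2) m s)).fun_add hsum).add_const (aCoeff (m + 2))
  refine (h.congr_deriv ?_).congr_of_eventuallyEq (.of_forall fun x => ?_)
  · simp only [Ppoly, Nat.add_sub_cancel, one_mul]
  · simp only [one_mul]

lemma Ppoly_add_two_zero (m : ℕ) : Ppoly (m + 2) 0 = aCoeff (m + 2) := by
  rw [Ppoly_add_two, Finset.sum_eq_zero fun k hk => ?_]
  · simp
  · have := (Finset.mem_Icc.1 hk).2
    rw [zero_pow (by omega), mul_zero, zero_div]

lemma fermiDirac_le_Ppoly (m : ℕ) {s : ℝ} (hs : 0 ≤ s) :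
    fermiDirac (m + 1) s ≤ Ppoly (m + 1) s := by
  induction m generalizing s with
  | zero =>
    have h : 1 + Real.exp s ≤ 2 * Real.exp s := by linarith [Real.one_le_exp hs]
    calc fermiDirac 1 s = Real.log (1 + Real.exp s) := fermiDirac_one s
      _ ≤ Real.log (2 * Real.exp s) := Real.log_le_log (by positivity) h
      _ = Ppoly 1 s := by
        rw [Real.log_mul two_ne_zero (Real.exp_ne_zero s), Real.log_exp]
        simp [Ppoly, add_comm]
  | succ m ih =>
    have hderiv : ∀ x, HasDerivAt (fun s => Ppoly (m + 2) s - fermiDirac (m + 2) s)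
        (Ppoly (m + 1) x - fermiDirac (m + 1) x) x := fun x =>
      (hasDerivAt_Ppoly m x).sub (hasDerivAt_fermiDirac (m + 1) x)
    have hmono : MonotoneOn (fun s => Ppoly (m + 2) s - fermiDirac (m + 2) s) (Ici 0) :=
      monotoneOn_of_hasDerivWithinAt_nonneg (convex_Ici 0)
        (continuous_iff_continuousAt.2 fun x => (hderiv x).continuousAt).continuousOn
        (fun x _ => (hderiv x).hasDerivWithinAt)
        (fun x hx => sub_nonneg.2 (ih (interior_Ici.subset hx).le))
    have h := hmono self_mem_Ici hs hs
    simp only [Ppoly_add_two_zero, fermiDirac_succ_zero, sub_self, sub_nonneg] at h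
    exact h

lemma fermiDirac_le_Ppoly_max_add_aCoeff (m : ℕ) (s : ℝ) :
    fermiDirac (m + 1) s ≤ Ppoly (m + 1) (max s 0) + aCoeff (m + 1) := by
  rw [← fermiDirac_succ_zero]
  have h0 := (fermiDirac_mem_Icc (m + 1) 0).1
  rcases le_total 0 s with hs | hs
  · rw [max_eq_left hs]
    linarith [fermiDirac_le_Ppoly m hs]
  · rw [max_eq_right hs]
    linarith [monotone_fermiDirac_succ m hs, fermiDirac_le_Ppoly m le_rfl]

theorem fermi_dirac_two_term_eq_and_bound_general (d : ℕ) (t L : ℝ)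
    (ht : 0 ≤ t) (hL : 0 ≤ L) :
    (∫ x in Set.Ioi (0:ℝ),
        x ^ d * (1 / (1 + Real.exp (x - t - L / 2)) + 1 / (1 + Real.exp (x - t + L / 2))))
      = (d ! : ℝ) * (-(Li (d + 1) (-Real.exp (t + L / 2)))
          - Li (d + 1) (-Real.exp (t - L / 2))) ∧
    (∫ x in Set.Ioi (0:ℝ),
        x ^ d * (1 / (1 + Real.exp (x - t - L / 2)) + 1 / (1 + Real.exp (x - t + L / 2))))
      ≤ (d ! : ℝ) * (Ppoly (d + 1) (t + L / 2) + Ppoly (d + 1) (max (t - L / 2) 0)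
          + aCoeff (d + 1)) := by
  have hintegrand : ∀ x : ℝ,
      x ^ d * (1 / (1 + Real.exp (x - t - L / 2)) + 1 / (1 + Real.exp (x - t + L / 2)))
        = x ^ d * fermiDirac 0 (t + L / 2 - x) + x ^ d * fermiDirac 0 (t - L / 2 - x) := by
    intro x
    simp only [fermiDirac]
    ring_nf
  have heq : (∫ x in Set.Ioi (0:ℝ),
      x ^ d * (1 / (1 + Real.exp (x - t - L / 2)) + 1 / (1 + Real.exp (x - t + L / 2))))
        = d ! * (fermiDirac (d + 1) (t + L / 2) + fermiDirac (d + 1) (t - L / 2)) := by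
    simp only [hintegrand]
    rw [integral_add (integrableOn_pow_mul_fermiDirac_sub d 0 _)
      (integrableOn_pow_mul_fermiDirac_sub d 0 _), integral_pow_mul_fermiDirac_sub,
      integral_pow_mul_fermiDirac_sub, zero_add, mul_add]
  refine ⟨heq.trans (by simp only [fermiDirac]; ring), heq ▸ ?_⟩
  refine mul_le_mul_of_nonneg_left ?_ (Nat.cast_nonneg _)
  linarith [fermiDirac_le_Ppoly d (by linarith : 0 ≤ t + L / 2),
    fermiDirac_le_Ppoly_max_add_aCoeff d (t - L / 2)]

/-- For `t ≥ L/2 ≥ 0` and `d ≥ 1`, the integral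
`∫₀^∞ x^d (1/(1+e^{x-t-L/2}) + 1/(1+e^{x-t+L/2})) dx` equals
`d! (-Li_{d+1}(-e^{t+L/2}) - Li_{d+1}(-e^{t-L/2}))`, and is bounded above by
`d! (P_{d+1}(t+L/2) + P_{d+1}(max(t-L/2,0)) + a_{d+1})`. -/
theorem fermi_dirac_two_term_eq_and_bound (d : ℕ) (hd : 1 ≤ d) (t L : ℝ)
    (ht : 0 ≤ t) (hL : 0 ≤ L) (htL : L / 2 ≤ t) :
    (∫ x in Set.Ioi (0:ℝ),
        x ^ d * (1 / (1 + Real.exp (x - t - L / 2)) + 1 / (1 + Real.exp (x - t + L / 2))))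
      = (d ! : ℝ) * (-(Li (d + 1) (-Real.exp (t + L / 2)))
          - Li (d + 1) (-Real.exp (t - L / 2))) ∧
    (∫ x in Set.Ioi (0:ℝ),
        x ^ d * (1 / (1 + Real.exp (x - t - L / 2)) + 1 / (1 + Real.exp (x - t + L / 2))))
      ≤ (d ! : ℝ) * (Ppoly (d + 1) (t + L / 2) + Ppoly (d + 1) (max (t - L / 2) 0)
          + aCoeff (d + 1)) :=
  fermi_dirac_two_term_eq_and_bound_general d t L ht hL
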